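/- Let E be a right H-comodule algebra and γ : H → E a convolution-invertible morphism of right H-comodule algebras. Then for each h ∈ H and u ∈ E^{coH}, the element h▷u := Σ γ(h₍₁₎) u γ(Sh₍₂₎) lies in E^{coH}, and ▷ makes E^{coH} an H-module algebra. -/

import Mathlib

/-!
In the convolution algebra `WithConv (H →ₗ[k] E)` the action reads `(· ▷ u) = γ * ε_u * γ ∘ S`,
where `ε_u h = ε h • u`. Since `u ↦ ε_u` is multiplicative and `γ ∘ S` is the convolution inverse
of `γ`, the module-algebra identities follow by cancelling `γ ∘ S * γ`; the module identities come
from `γ` being multiplicative and `S` anti-multiplicative.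

For coinvariance, compose with `ρ` and with `ι = includeLeft`: both conjugate `ε_{u ⊗ 1}`, by
`ρ ∘ γ` and by `ι ∘ γ` respectively. The hypothesis on `γ` says `ρ ∘ γ = (ι ∘ γ) * J` with
`J h = 1 ⊗ h`, and `J` commutes with `ε_{u ⊗ 1}`, so the two conjugates agree.
-/

open TensorProduct

/-- The adjoint-type action `h ▷ u = Σ γ(h₍₁₎) u γ(S h₍₂₎)` as a linear map in `h`. -/
noncomputable def actL {k H E : Type*} [Field k] [Ring H] [HopfAlgebra k H] [Ring E]
    [Algebra k E] (γ : H →ₐ[k] E) (u : E) : H →ₗ[k] E :=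
  LinearMap.mul' k E ∘ₗ
    TensorProduct.map ((LinearMap.mulRight k u) ∘ₗ γ.toLinearMap)
      (γ.toLinearMap ∘ₗ HopfAlgebra.antipode (R := k)) ∘ₗ Coalgebra.comul

open Coalgebra WithConv

namespace LinearMap

section Convolution

variable {R C A B : Type*} [CommSemiring R] [AddCommMonoid C] [Module R C] [Coalgebra R C]
  [Semiring A] [Algebra R A] [Semiring B] [Algebra R B]

variable (R) in
def counitSMul (a : A) : WithConv (C →ₗ[R] A) := toConv (counit.smulRight a)

@[simp] lemma counitSMul_apply (a : A) (c : C) :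
    counitSMul R a c = counit (R := R) c • a := rfl

lemma _root_.Coalgebra.sum_counit_right_smul_left {c : C} {ι : Type*} (𝓡 : Repr R c ι) :
    ∑ i ∈ 𝓡.index, counit (R := R) (𝓡.right i) • 𝓡.left i = c := by
  simpa only [map_sum, rid_tmul, one_smul] using
    congr(TensorProduct.rid R C $(sum_tmul_counit_eq 𝓡))

lemma convMul_counitSMul (f : WithConv (C →ₗ[R] A)) (a : A) :
    f * counitSMul R a = toConv (mulRight R a ∘ₗ f.ofConv) := by
  ext c
  rw [(ℛ R c).convMul_apply]
  simp_rw [counitSMul_apply, mul_smul_comm, ← smul_mul_assoc, ← Finset.sum_mul, ← map_smul,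
    ← map_sum, sum_counit_right_smul_left (ℛ R c), comp_apply, mulRight_apply]

lemma counitSMul_convMul (a : A) (f : WithConv (C →ₗ[R] A)) :
    counitSMul R a * f = toConv (mulLeft R a ∘ₗ f.ofConv) := by
  ext c
  rw [(ℛ R c).convMul_apply]
  simp_rw [counitSMul_apply, smul_mul_assoc, ← mul_smul_comm, ← Finset.mul_sum, ← map_smul,
    ← map_sum, sum_counit_smul, comp_apply, mulLeft_apply]

@[simp] lemma counitSMul_one : counitSMul R (1 : A) = (1 : WithConv (C →ₗ[R] A)) := by
  ext c
  simp [Algebra.algebraMap_eq_smul_one]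

lemma counitSMul_mul (a b : A) :
    counitSMul R (a * b) = (counitSMul R a * counitSMul R b : WithConv (C →ₗ[R] A)) := by
  ext c
  simp [convMul_counitSMul]

lemma commute_counitSMul {f : WithConv (C →ₗ[R] A)} {a : A} (hf : ∀ c, Commute (f c) a) :
    Commute f (counitSMul R a) := by
  ext c
  simp [convMul_counitSMul, counitSMul_convMul, (hf c).eq]

def _root_.AlgHom.compConv (φ : A →ₐ[R] B) : WithConv (C →ₗ[R] A) →+* WithConv (C →ₗ[R] B) where
  toFun f := toConv (φ.toLinearMap ∘ₗ f.ofConv)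
  map_one' := by ext; simp
  map_mul' f g := by ext; simp [algHom_comp_convMul_distrib]
  map_zero' := by ext; simp
  map_add' f g := by ext; simp

@[simp] lemma _root_.AlgHom.compConv_apply (φ : A →ₐ[R] B) (f : WithConv (C →ₗ[R] A)) (c : C) :
    φ.compConv f c = φ (f c) := rfl

lemma _root_.AlgHom.compConv_counitSMul (φ : A →ₐ[R] B) (a : A) :
    φ.compConv (counitSMul R a) = (counitSMul R (φ a) : WithConv (C →ₗ[R] B)) := by
  ext; simp

end Convolution

end LinearMap

theorem mul_mul_eq_of_eq_mul_of_commute {M : Type*} [Monoid M] {a a' b b' j x : M}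
    (ha : a * a' = 1) (hb : b' * b = 1) (hab : a = b * j) (hjx : Commute j x) :
    a * x * a' = b * x * b' := by
  have hj : j * a' = b' := calc
    j * a' = b' * a * a' := by rw [hab, ← mul_assoc b', hb, one_mul]
    _ = b' := by rw [mul_assoc, ha, mul_one]
  rw [hab, mul_assoc b, hjx.eq, ← mul_assoc, mul_assoc, hj]

section Hopf

open LinearMap HopfAlgebra Algebra.TensorProduct

variable {R H E : Type*} [CommSemiring R] [Semiring H] [HopfAlgebra R H] [Semiring E] [Algebra R E]

lemma convMul_antipode_comp (γ : H →ₐ[R] E) :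
    toConv γ.toLinearMap * toConv (γ.toLinearMap ∘ₗ antipode R) = 1 := by
  have h := congr(γ.compConv $(id_mul_antipode (R := R) (C := H)))
  rwa [map_mul, map_one] at h

lemma antipode_comp_convMul (γ : H →ₐ[R] E) :
    toConv (γ.toLinearMap ∘ₗ antipode R) * toConv γ.toLinearMap = 1 := by
  have h := congr(γ.compConv $(antipode_mul_id (R := R) (C := H)))
  rwa [map_mul, map_one] at h

lemma compConv_eq_includeLeft_convMul_mk (ρ : E →ₐ[R] E ⊗[R] H) (γ : H →ₐ[R] E)
    (hγ : ∀ h, ρ (γ h) = TensorProduct.map γ.toLinearMap LinearMap.id (comul h)) :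
    ρ.compConv (toConv γ.toLinearMap) =
      includeLeft.compConv (toConv γ.toLinearMap) * toConv (TensorProduct.mk R E H 1) := by
  ext h
  rw [(ℛ R h).convMul_apply]
  simp [hγ, ← (ℛ R h).eq, tmul_mul_tmul]

lemma compConv_conj_eq_includeLeft (ρ : E →ₐ[R] E ⊗[R] H) (γ : H →ₐ[R] E)
    (hγ : ∀ h, ρ (γ h) = TensorProduct.map γ.toLinearMap LinearMap.id (comul h))
    {u : E} (hu : ρ u = u ⊗ₜ 1) :
    ρ.compConv (toConv γ.toLinearMap * counitSMul R u * toConv (γ.toLinearMap ∘ₗ antipode R)) =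
      includeLeft.compConv
        (toConv γ.toLinearMap * counitSMul R u * toConv (γ.toLinearMap ∘ₗ antipode R)) := by
  simp only [map_mul, AlgHom.compConv_counitSMul, hu, includeLeft_apply]
  refine mul_mul_eq_of_eq_mul_of_commute ?_ ?_ (compConv_eq_includeLeft_convMul_mk ρ γ hγ) ?_
  · rw [← map_mul, convMul_antipode_comp, map_one]
  · rw [← map_mul, antipode_comp_convMul, map_one]
  · exact commute_counitSMul fun h => by simp [Commute, SemiconjBy, tmul_mul_tmul]

end Hopf

section Action

open LinearMap HopfAlgebra

variable {k H E : Type*} [Field k] [Ring H] [HopfAlgebra k H] [Ring E] [Algebra k E]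

lemma toConv_actL (γ : H →ₐ[k] E) (u : E) :
    toConv (actL γ u) =
      toConv γ.toLinearMap * counitSMul k u * toConv (γ.toLinearMap ∘ₗ antipode k) := by
  rw [convMul_counitSMul]
  rfl

lemma Coalgebra.Repr.actL_apply (γ : H →ₐ[k] E) (u : E) {h : H} {ι : Type*}
    (𝓡 : Coalgebra.Repr k h ι) :
    actL γ u h = ∑ i ∈ 𝓡.index, γ (𝓡.left i) * u * γ (antipode k (𝓡.right i)) :=
  𝓡.convMul_apply (toConv (mulRight k u ∘ₗ γ.toLinearMap)) _

lemma coaction_actL (ρ : E →ₐ[k] E ⊗[k] H) (γ : H →ₐ[k] E)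
    (hγ : ∀ h, ρ (γ h) = TensorProduct.map γ.toLinearMap LinearMap.id (Coalgebra.comul h))
    {u : E} (hu : ρ u = u ⊗ₜ 1) (h : H) :
    ρ (actL γ u h) = actL γ u h ⊗ₜ 1 := by
  have := congr($(compConv_conj_eq_includeLeft ρ γ hγ hu) h)
  rwa [← toConv_actL] at this

lemma actL_apply_one (γ : H →ₐ[k] E) (u : E) : actL γ u 1 = u := by
  simp [actL, Algebra.TensorProduct.one_def]

lemma actL_apply_mul (γ : H →ₐ[k] E) (u : E) (g h : H) :
    actL γ u (g * h) = actL γ (actL γ u h) g := by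
  rw [((ℛ k g).mul (ℛ k h)).actL_apply, (ℛ k g).actL_apply]
  simp [Finset.sum_product, (ℛ k h).actL_apply, antipode_mul_antidistrib, Finset.mul_sum,
    Finset.sum_mul, mul_assoc]

lemma toConv_actL_mul (γ : H →ₐ[k] E) (u v : E) :
    toConv (actL γ (u * v)) = toConv (actL γ u) * toConv (actL γ v) := by
  simp only [toConv_actL, counitSMul_mul, mul_assoc]
  rw [← mul_assoc (toConv (γ.toLinearMap ∘ₗ antipode k)), antipode_comp_convMul, one_mul]

lemma actL_one (γ : H →ₐ[k] E) (h : H) :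
    actL γ 1 h = Coalgebra.counit (R := k) h • (1 : E) := by
  have := congr($(toConv_actL γ 1) h)
  simpa [convMul_antipode_comp, Algebra.algebraMap_eq_smul_one] using this

end Action

theorem stmt5 {k H E : Type*} [Field k] [Ring H] [HopfAlgebra k H] [Ring E] [Algebra k E]
    (ρ : E →ₐ[k] E ⊗[k] H)
    (γ : H →ₐ[k] E)
    (hγ : ∀ h : H, ρ (γ h) =
      TensorProduct.map γ.toLinearMap LinearMap.id (Coalgebra.comul (R := k) h)) :
    -- the action preserves coinvariants
    (∀ (h : H) (u : E), ρ u = u ⊗ₜ (1 : H) →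
      ρ (actL γ u h) = actL γ u h ⊗ₜ (1 : H)) ∧
    -- module axioms on the coinvariants
    (∀ u : E, ρ u = u ⊗ₜ (1 : H) → actL γ u (1 : H) = u) ∧
    (∀ (g h : H) (u : E), ρ u = u ⊗ₜ (1 : H) →
      actL γ u (g * h) = actL γ (actL γ u h) g) ∧
    -- module-algebra axioms:  h ▷ (uv) = Σ (h₍₁₎ ▷ u)(h₍₂₎ ▷ v)  and  h ▷ 1 = ε(h) 1
    (∀ (h : H) (u v : E), ρ u = u ⊗ₜ (1 : H) → ρ v = v ⊗ₜ (1 : H) →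
      actL γ (u * v) h =
        LinearMap.mul' k E
          (TensorProduct.map (actL γ u) (actL γ v) (Coalgebra.comul (R := k) h))) ∧
    (∀ h : H, actL γ (1 : E) h = Coalgebra.counit (R := k) h • (1 : E)) :=
  ⟨fun h _ hu => coaction_actL ρ γ hγ hu h,
    fun u _ => actL_apply_one γ u,
    fun g h u _ => actL_apply_mul γ u g h,
    fun h u v _ _ => congr($(toConv_actL_mul γ u v) h),
    actL_one γ⟩
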